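/- arXiv:2005.00726 — 4 statements merged into one kernel-verified Lean document; each statement's English description precedes it below -/
import Mathlib

section
/- Let q = p^m with p an odd prime, let n = (q-1)/(p^r+1) for some positive integer r with (p^r+1) | (q-1), and let ω be a primitive element of F_q. For any α_i, α_j ∈ F_q^* with α_i^n ≠ α_j^n, raising α_i^n - α_j^n to the power p^r - 1 gives (α_i^n - α_j^n)^(p^r - 1) = ω^(n(p^r+1)/2) / (α_i^n · α_j^n). -/
/-!
Since `n (p^r + 1) = q - 1`, the elements `x = αᵢ^n` and `y = αⱼ^n` satisfy `x^(p^r+1) = 1`, so the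
Frobenius power `p^r` inverts them: `(x - y)^(p^r) = x⁻¹ - y⁻¹ = -(x - y)/(x y)`. Cancelling
`x - y ≠ 0` gives `(x - y)^(p^r-1) = -1/(x y)`, and `-1 = ω^((q-1)/2)` because `ω` has even order `q - 1`.
-/

theorem IsPrimitiveRoot.pow_div_two_eq_neg_one {R : Type*} [CommRing R] [NoZeroDivisors R]
    {ζ : R} {k : ℕ} (h : IsPrimitiveRoot ζ k) (hk : Even k) (hk0 : k ≠ 0) :
    ζ ^ (k / 2) = -1 := by
  have hhalf : k / 2 ≠ 0 := by rcases hk with ⟨j, rfl⟩; omega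
  refine IsPrimitiveRoot.eq_neg_one_of_two_right ?_
  simpa [Nat.div_div_self (even_iff_two_dvd.mp hk) hk0] using
    h.pow_of_dvd hhalf (Nat.div_dvd_of_dvd (even_iff_two_dvd.mp hk))

theorem sub_pow_pred_eq_neg_one_div_mul {K : Type*} [Field K] {p : ℕ} [ExpChar K p] {r : ℕ}
    {x y : K} (hx : x ^ (p ^ r + 1) = 1) (hy : y ^ (p ^ r + 1) = 1) (hxy : x ≠ y) :
    (x - y) ^ (p ^ r - 1) = -1 / (x * y) := by
  have hx0 : x ≠ 0 := by rintro rfl; simp at hx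
  have hy0 : y ≠ 0 := by rintro rfl; simp at hy
  have hsub : x - y ≠ 0 := sub_ne_zero.mpr hxy
  have hfrob : (x - y) ^ (p ^ r) = x⁻¹ - y⁻¹ := by
    rw [sub_pow_expChar_pow, eq_inv_of_mul_eq_one_left ((pow_succ x _).symm.trans hx),
      eq_inv_of_mul_eq_one_left ((pow_succ y _).symm.trans hy)]
  have hpred : (x - y) ^ (p ^ r - 1) * (x - y) = (x - y) ^ (p ^ r) := by
    rw [← pow_succ, Nat.sub_add_cancel (Nat.one_le_pow _ _ (expChar_pos K p))]
  rw [hfrob] at hpred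
  rw [eq_div_of_mul_eq hsub hpred]
  field_simp
  ring

theorem stmt0_general {p m r : ℕ} (hp : p.Prime) (hodd : p ≠ 2)
    (F : Type*) [Field F] [Fintype F] (hF : Fintype.card F = p ^ m)
    (hdvd : (p ^ r + 1) ∣ (p ^ m - 1))
    (n : ℕ) (hn : n = (p ^ m - 1) / (p ^ r + 1))
    (ω : F) (hω : orderOf ω = p ^ m - 1)
    (αi αj : F) (hi : αi ≠ 0) (hj : αj ≠ 0) (hne : αi ^ n ≠ αj ^ n) :
    (αi ^ n - αj ^ n) ^ (p ^ r - 1) = ω ^ (n * (p ^ r + 1) / 2) / (αi ^ n * αj ^ n) := by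
  have : Fact p.Prime := ⟨hp⟩
  have : CharP F p := charP_of_card_eq_prime_pow hF
  have hnq : n * (p ^ r + 1) = Fintype.card F - 1 := by rw [hn, hF, Nat.div_mul_cancel hdvd]
  have hunit (α : F) (hα : α ≠ 0) : (α ^ n) ^ (p ^ r + 1) = 1 := by
    rw [← pow_mul, hnq, FiniteField.pow_card_sub_one_eq_one α hα]
  have hq : 1 < p ^ m := hF ▸ Fintype.one_lt_card
  have hω' : ω ^ (n * (p ^ r + 1) / 2) = -1 := by
    rw [hnq, hF]
    exact (hω ▸ IsPrimitiveRoot.orderOf ω).pow_div_two_eq_neg_one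
      (Nat.Odd.sub_odd (hp.odd_of_ne_two hodd).pow odd_one) (by omega)
  rw [hω', sub_pow_pred_eq_neg_one_div_mul (hunit αi hi) (hunit αj hj) hne]

/-- Lemma `alpha_ij`: for `q = p^m`, `p` an odd prime, `n = (q-1)/(p^r+1)` and a primitive
element `ω` of `F_q`, for nonzero `αᵢ, αⱼ` with `αᵢ^n ≠ αⱼ^n` one has
`(αᵢ^n - αⱼ^n)^(p^r - 1) = ω^(n(p^r+1)/2) / (αᵢ^n · αⱼ^n)`. -/
theorem stmt0 {p m r : ℕ} (hp : p.Prime) (hodd : p ≠ 2) (hm : 0 < m) (hr : 0 < r)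
    (F : Type*) [Field F] [Fintype F] (hF : Fintype.card F = p ^ m)
    (hdvd : (p ^ r + 1) ∣ (p ^ m - 1))
    (n : ℕ) (hn : n = (p ^ m - 1) / (p ^ r + 1))
    (ω : F) (hω : orderOf ω = p ^ m - 1)
    (αi αj : F) (hi : αi ≠ 0) (hj : αj ≠ 0) (hne : αi ^ n ≠ αj ^ n) :
    (αi ^ n - αj ^ n) ^ (p ^ r - 1) = ω ^ (n * (p ^ r + 1) / 2) / (αi ^ n * αj ^ n) :=
  stmt0_general hp hodd F hF hdvd n hn ω hω αi αj hi hj hne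
end

section
/- Let n be an odd positive integer and C a self-orthogonal linear code over F_q of length n and dimension (n-1)/2. Then there exists a self-orthogonal code C_0 of length n+1 and dimension (n-1)/2 (obtained by appending a zero coordinate), and if there exists a nonzero element x of the quotient space C_0^⊥ / C_0 with x·x = 0, then there exists a self-dual code C_0' of length n+1 and dimension (n+1)/2 with C_0 ⊆ C_0' ⊆ C_0^⊥. -/
/-!
Padding with a zero coordinate preserves the dot product and is injective, so `C₀` is again
self-orthogonal of dimension `(n - 1) / 2`. An isotropic vector `x ∈ C₀^⊥ \ C₀` is orthogonal to
`C₀` and to itself, so `C₀ + ⟨x⟩` is self-orthogonal of dimension `(n + 1) / 2`, half the length;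
since `dim D + dim D^⊥ = n + 1`, a self-orthogonal code of half the length is self-dual.
-/

open Finset

/-- The Euclidean dual of a linear code `C ⊆ F^n`. -/
def euclideanDual {F : Type*} [Field F] {n : ℕ} (C : Submodule F (Fin n → F)) :
    Submodule F (Fin n → F) where
  carrier := {x | ∀ c ∈ C, ∑ i, x i * c i = 0}
  add_mem' := by
    intro a b ha hb c hc
    have h1 := ha c hc
    have h2 := hb c hc
    simp only [Pi.add_apply, add_mul, Finset.sum_add_distrib, h1, h2, add_zero]
  zero_mem' := by intro c hc; simp
  smul_mem' := by
    intro r x hx c hc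
    have h := hx c hc
    simp only [Pi.smul_apply, smul_eq_mul, mul_assoc, ← Finset.mul_sum, h, mul_zero]

open Module Submodule

section EuclideanDual

variable {F : Type*} [Field F] {m k : ℕ}

lemma euclideanDual_antitone : Antitone (euclideanDual (F := F) (n := m)) :=
  fun _ _ h _ hx c hc => hx c (h hc)

lemma le_euclideanDual_comm {C D : Submodule F (Fin m → F)} :
    C ≤ euclideanDual D ↔ D ≤ euclideanDual C :=
  have symm {C D : Submodule F (Fin m → F)} (h : C ≤ euclideanDual D) : D ≤ euclideanDual C :=
    fun d hd c hc => (dotProduct_comm d c).trans (h hc d hd)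
  ⟨symm, symm⟩

lemma euclideanDual_eq_comap_dualAnnihilator (C : Submodule F (Fin m → F)) :
    euclideanDual C = C.dualAnnihilator.comap (dotProductEquiv F (Fin m)).toLinearMap := by
  ext x
  simp [euclideanDual, mem_dualAnnihilator, dotProduct]

lemma euclideanDual_sup (C D : Submodule F (Fin m → F)) :
    euclideanDual (C ⊔ D) = euclideanDual C ⊓ euclideanDual D := by
  simp only [euclideanDual_eq_comap_dualAnnihilator, dualAnnihilator_sup_eq, comap_inf]

lemma mem_euclideanDual_span_singleton {x y : Fin m → F} :
    y ∈ euclideanDual (span F {x}) ↔ y ⬝ᵥ x = 0 := by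
  refine ⟨fun h => h x (mem_span_singleton_self x), fun h c hc => ?_⟩
  obtain ⟨r, rfl⟩ := mem_span_singleton.1 hc
  exact (dotProduct_smul r y x).trans (by rw [h, smul_zero])

lemma finrank_add_finrank_euclideanDual (C : Submodule F (Fin m → F)) :
    finrank F C + finrank F (euclideanDual C) = m := by
  rw [euclideanDual_eq_comap_dualAnnihilator, comap_equiv_eq_map_symm,
    LinearEquiv.finrank_map_eq, Subspace.finrank_add_finrank_dualAnnihilator_eq,
    finrank_fin_fun]

lemma eq_euclideanDual_of_le_of_two_mul_finrank_eq {C : Submodule F (Fin m → F)}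
    (hC : C ≤ euclideanDual C) (hdim : 2 * finrank F C = m) : C = euclideanDual C :=
  eq_of_le_of_finrank_eq hC (by have := finrank_add_finrank_euclideanDual C; omega)

lemma map_le_euclideanDual_map {f : (Fin m → F) →ₗ[F] (Fin k → F)}
    (hf : ∀ x y, f x ⬝ᵥ f y = x ⬝ᵥ y) {C : Submodule F (Fin m → F)}
    (hC : C ≤ euclideanDual C) : C.map f ≤ euclideanDual (C.map f) := by
  rintro _ ⟨a, ha, rfl⟩ _ ⟨b, hb, rfl⟩
  exact (hf a b).trans (hC ha b hb)

lemma sup_span_singleton_le_euclideanDual {C : Submodule F (Fin m → F)} {x : Fin m → F}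
    (hC : C ≤ euclideanDual C) (hx : x ∈ euclideanDual C) (hxx : x ⬝ᵥ x = 0) :
    C ⊔ span F {x} ≤ euclideanDual (C ⊔ span F {x}) := by
  have hxC : span F {x} ≤ euclideanDual C := (span_singleton_le_iff_mem _ _).2 hx
  have hxx' : span F {x} ≤ euclideanDual (span F {x}) :=
    (span_singleton_le_iff_mem _ _).2 (mem_euclideanDual_span_singleton.2 hxx)
  rw [euclideanDual_sup]
  exact sup_le (le_inf hC (le_euclideanDual_comm.1 hxC)) (le_inf hxC hxx')

lemma exists_selfDual_of_isotropic {C : Submodule F (Fin m → F)} (hC : C ≤ euclideanDual C)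
    (hdim : 2 * (finrank F C + 1) = m) {x : Fin m → F} (hx : x ∈ euclideanDual C)
    (hxC : x ∉ C) (hxx : x ⬝ᵥ x = 0) :
    ∃ D : Submodule F (Fin m → F), D = euclideanDual D ∧ finrank F D = finrank F C + 1 ∧
      C ≤ D ∧ D ≤ euclideanDual C := by
  have hfinrank : finrank F ↥(C ⊔ span F {x}) = finrank F C + 1 :=
    finrank_sup_span_singleton hxC
  have hselfDual : C ⊔ span F {x} = euclideanDual (C ⊔ span F {x}) :=
    eq_euclideanDual_of_le_of_two_mul_finrank_eq (sup_span_singleton_le_euclideanDual hC hx hxx)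
      (hfinrank ▸ hdim)
  refine ⟨C ⊔ span F {x}, hselfDual, hfinrank, le_sup_left, ?_⟩
  exact hselfDual.trans_le (euclideanDual_antitone le_sup_left)

end EuclideanDual

section PadZero

variable (F : Type*) [Field F] (n : ℕ)

def padZero : (Fin n → F) →ₗ[F] (Fin (n + 1) → F) :=
  { toFun := fun x i => if h : (i : ℕ) < n then x ⟨i, h⟩ else 0,
    map_add' := by
      intro x y; funext i; by_cases h : (i : ℕ) < n <;> simp [h],
    map_smul' := by
      intro r x; funext i; by_cases h : (i : ℕ) < n <;> simp [h] }

variable {F n}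

@[simp]
lemma padZero_castSucc (x : Fin n → F) (i : Fin n) : padZero F n x i.castSucc = x i := by
  simp [padZero]

@[simp]
lemma padZero_last (x : Fin n → F) : padZero F n x (Fin.last n) = 0 := by
  simp [padZero]

lemma padZero_injective : Function.Injective (padZero F n) :=
  fun x y h => funext fun i => by simpa using congrFun h i.castSucc

lemma padZero_dotProduct_padZero (x y : Fin n → F) :
    padZero F n x ⬝ᵥ padZero F n y = x ⬝ᵥ y := by
  simp [dotProduct, Fin.sum_univ_castSucc]

end PadZero

/-- If `n` is odd and `C` is a self-orthogonal `[n, (n-1)/2]` code over `F_q`, then appending a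
zero coordinate gives a self-orthogonal `[n+1, (n-1)/2]` code `C₀`, and whenever there is an
isotropic vector `x ∈ C₀^⊥ \ C₀`, there is a self-dual `[n+1, (n+1)/2]` code `C₀'` with
`C₀ ⊆ C₀' ⊆ C₀^⊥`. -/
theorem stmt4 {F : Type*} [Field F] {n : ℕ} (hn : Odd n)
    (C : Submodule F (Fin n → F)) (hso : C ≤ euclideanDual C)
    (hdim : Module.finrank F C = (n - 1) / 2) :
    ∃ C₀ : Submodule F (Fin (n + 1) → F),
      C₀ = Submodule.map
          ({ toFun := fun x i => if h : (i : ℕ) < n then x ⟨i, h⟩ else 0,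
             map_add' := by
               intro x y; funext i; by_cases h : (i : ℕ) < n <;> simp [h],
             map_smul' := by
               intro r x; funext i; by_cases h : (i : ℕ) < n <;> simp [h] } :
            (Fin n → F) →ₗ[F] (Fin (n + 1) → F)) C ∧
      C₀ ≤ euclideanDual C₀ ∧ Module.finrank F C₀ = (n - 1) / 2 ∧
      ((∃ x ∈ euclideanDual C₀, x ∉ C₀ ∧ ∑ i, x i * x i = 0) →
        ∃ C₀' : Submodule F (Fin (n + 1) → F),
          C₀' = euclideanDual C₀' ∧ Module.finrank F C₀' = (n + 1) / 2 ∧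
          C₀ ≤ C₀' ∧ C₀' ≤ euclideanDual C₀) := by
  have hso₀ : C.map (padZero F n) ≤ euclideanDual (C.map (padZero F n)) :=
    map_le_euclideanDual_map padZero_dotProduct_padZero hso
  have hdim₀ : finrank F (C.map (padZero F n)) = (n - 1) / 2 :=
    (equivMapOfInjective _ padZero_injective C).finrank_eq.symm.trans hdim
  refine ⟨C.map (padZero F n), rfl, hso₀, hdim₀, ?_⟩
  rintro ⟨x, hx, hxC₀, hxx⟩
  obtain ⟨k, rfl⟩ := hn
  obtain ⟨D, hD, hDdim, hC₀D, hDC₀⟩ :=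
    exists_selfDual_of_isotropic hso₀ (by omega) hx hxC₀ hxx
  exact ⟨D, hD, by omega, hC₀D, hDC₀⟩
end

section
/- Let q be an odd prime power, n | q - 1, U_n the group of n-th roots of unity in F_q, and β_1 ∈ F_q^* with β_1^n ∉ {0,1}. Set h(x) = x(x^n - 1)(x^n - β_1^n). If -1, n, β_1^n, and β_1^n - 1 are all squares in F_q^*, then h'(β) is a nonzero square in F_q for every β ∈ U_n ∪ β_1 U_n ∪ {0}. -/
/-!
Writing `a = β₁ⁿ`, the derivative of `h = X (Xⁿ - 1)(Xⁿ - a)` satisfies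
`h'(β) = (βⁿ - 1)(βⁿ - a) + n βⁿ (βⁿ - a) + n βⁿ (βⁿ - 1)`, which depends on `β` only through `βⁿ`.
Hence `h'(β) = (-1) · n · (a - 1)` on `U_n`, `h'(β) = n · a · (a - 1)` on `β₁ U_n` and `h'(0) = a`,
each a product of the given nonzero squares.
-/

open Polynomial

section NonzeroSquare

variable {M : Type*} [CommMonoidWithZero M] [NoZeroDivisors M]

theorem exists_ne_zero_sq_mul {x y : M} (hx : ∃ c : M, c ≠ 0 ∧ c ^ 2 = x)
    (hy : ∃ c : M, c ≠ 0 ∧ c ^ 2 = y) : ∃ c : M, c ≠ 0 ∧ c ^ 2 = x * y := by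
  obtain ⟨c, hc, rfl⟩ := hx
  obtain ⟨d, hd, rfl⟩ := hy
  exact ⟨c * d, mul_ne_zero hc hd, mul_pow c d 2⟩

end NonzeroSquare

section DerivativeValues

variable {R : Type*} [CommRing R] (n : ℕ) (a : R)

theorem eval_derivative_X_mul_X_pow_sub_one_mul_X_pow_sub (β : R) :
    (derivative (X * (X ^ n - 1) * (X ^ n - C a))).eval β =
      (β ^ n - 1) * (β ^ n - a) + n * β ^ n * (β ^ n - a) + n * β ^ n * (β ^ n - 1) := by
  rcases n with _ | n
  · simp
  · simp only [derivative_mul, derivative_X, derivative_sub, derivative_X_pow, derivative_one,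
      derivative_C, eval_add, eval_mul, eval_sub, eval_pow, eval_X, eval_one, eval_C,
      eval_zero, eval_natCast, Nat.add_sub_cancel, map_natCast]
    ring

theorem eval_derivative_X_mul_X_pow_sub_one_mul_X_pow_sub_of_pow_eq_one {β : R}
    (hβ : β ^ n = 1) :
    (derivative (X * (X ^ n - 1) * (X ^ n - C a))).eval β = -1 * n * (a - 1) := by
  rw [eval_derivative_X_mul_X_pow_sub_one_mul_X_pow_sub, hβ]
  ring

theorem eval_derivative_X_mul_X_pow_sub_one_mul_X_pow_sub_of_pow_eq {β : R}
    (hβ : β ^ n = a) :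
    (derivative (X * (X ^ n - 1) * (X ^ n - C a))).eval β = n * a * (a - 1) := by
  rw [eval_derivative_X_mul_X_pow_sub_one_mul_X_pow_sub, hβ]
  ring

theorem eval_derivative_X_mul_X_pow_sub_one_mul_X_pow_sub_zero (hn : n ≠ 0) :
    (derivative (X * (X ^ n - 1) * (X ^ n - C a))).eval 0 = a := by
  rw [eval_derivative_X_mul_X_pow_sub_one_mul_X_pow_sub, zero_pow hn]
  ring

end DerivativeValues

theorem stmt8_general (F : Type*) [Field F]
    (n : ℕ) (hn : 0 < n)
    (β₁ : F)
    (hs1 : ∃ c : F, c ≠ 0 ∧ c ^ 2 = -1)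
    (hs2 : ∃ c : F, c ≠ 0 ∧ c ^ 2 = (n : F))
    (hs3 : ∃ c : F, c ≠ 0 ∧ c ^ 2 = β₁ ^ n)
    (hs4 : ∃ c : F, c ≠ 0 ∧ c ^ 2 = β₁ ^ n - 1) :
    ∀ β : F, (β ^ n = 1 ∨ (∃ u : F, u ^ n = 1 ∧ β = β₁ * u) ∨ β = 0) →
      ∃ c : F, c ≠ 0 ∧
        (derivative (X * (X ^ n - 1) * (X ^ n - C (β₁ ^ n)))).eval β = c ^ 2 := by
  rintro β (hβ | ⟨u, hu, rfl⟩ | rfl)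
  · rw [eval_derivative_X_mul_X_pow_sub_one_mul_X_pow_sub_of_pow_eq_one n _ hβ]
    simpa only [eq_comm] using exists_ne_zero_sq_mul (exists_ne_zero_sq_mul hs1 hs2) hs4
  · have hβ : (β₁ * u) ^ n = β₁ ^ n := by rw [mul_pow, hu, mul_one]
    rw [eval_derivative_X_mul_X_pow_sub_one_mul_X_pow_sub_of_pow_eq n _ hβ]
    simpa only [eq_comm] using exists_ne_zero_sq_mul (exists_ne_zero_sq_mul hs2 hs3) hs4
  · rw [eval_derivative_X_mul_X_pow_sub_one_mul_X_pow_sub_zero n _ hn.ne']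
    simpa only [eq_comm] using hs3

/-- If `-1`, `n`, `β₁ⁿ` and `β₁ⁿ - 1` are nonzero squares in `F_q`, then for
`h(x) = x(xⁿ - 1)(xⁿ - β₁ⁿ)`, the value `h'(β)` is a nonzero square for every
`β ∈ U_n ∪ β₁U_n ∪ {0}`. -/
theorem stmt8 (F : Type*) [Field F] [Fintype F]
    (hq : Odd (Fintype.card F)) (n : ℕ) (hn : 0 < n) (hnd : n ∣ Fintype.card F - 1)
    (β₁ : F) (hβ₁ : β₁ ≠ 0) (hβ₁n0 : β₁ ^ n ≠ 0) (hβ₁n1 : β₁ ^ n ≠ 1)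
    (hs1 : ∃ c : F, c ≠ 0 ∧ c ^ 2 = -1)
    (hs2 : ∃ c : F, c ≠ 0 ∧ c ^ 2 = (n : F))
    (hs3 : ∃ c : F, c ≠ 0 ∧ c ^ 2 = β₁ ^ n)
    (hs4 : ∃ c : F, c ≠ 0 ∧ c ^ 2 = β₁ ^ n - 1) :
    ∀ β : F, (β ^ n = 1 ∨ (∃ u : F, u ^ n = 1 ∧ β = β₁ * u) ∨ β = 0) →
      ∃ c : F, c ≠ 0 ∧
        (derivative (X * (X ^ n - 1) * (X ^ n - C (β₁ ^ n)))).eval β = c ^ 2 :=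
  stmt8_general F n hn β₁ hs1 hs2 hs3 hs4
end

section
/- Let q = p^m be an odd prime power that is a square (m even), r a positive integer with r | m/2, n = (q-1)/(p^r - 1), and let α_1, ..., α_t ∈ F_q^* have pairwise distinct n-th powers. Then for any 1 ≤ i, j ≤ t with i ≠ j, the element α_i^n - α_j^n is a square in F_q. -/
/-!
Write `q = p ^ m` and `n (p ^ r - 1) = q - 1`. Every `n`-th power `x ^ n` satisfies
`(x ^ n) ^ (p ^ r) = x ^ n`, so it lies in the subfield `𝔽_{p^r}`, and so does a difference of
two of them, the Frobenius `y ↦ y ^ (p ^ r)` being additive. Since `2 r ∣ m` and `p` is odd,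
`(p ^ r - 1) * 2 ∣ q - 1`, hence every nonzero `y ∈ 𝔽_{p^r}` satisfies `y ^ ((q - 1) / 2) = 1`,
which is Euler's criterion for `y` to be a square in `𝔽_q`.
-/

theorem Nat.sub_one_mul_two_dvd_pow_two_mul_sub_one {x : ℕ} (hx : Odd x) (k : ℕ) :
    (x - 1) * 2 ∣ x ^ (2 * k) - 1 :=
  calc (x - 1) * 2 ∣ (x + 1) * (x - 1) := by
        rw [mul_comm (x + 1)]; exact mul_dvd_mul_left _ hx.add_one.two_dvd
    _ = x ^ 2 - 1 ^ 2 := (Nat.sq_sub_sq x 1).symm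
    _ ∣ (x ^ 2) ^ k - (1 ^ 2) ^ k := Nat.sub_dvd_pow_sub_pow _ _ k
    _ = x ^ (2 * k) - 1 := by rw [← pow_mul, one_pow, one_pow]

namespace FiniteField

variable {F : Type*} [Field F] [Fintype F]

theorem pow_pow_succ_eq_pow {n k : ℕ} (h : n * k = Fintype.card F - 1) (x : F) :
    (x ^ n) ^ (k + 1) = x ^ n := by
  rcases eq_or_ne x 0 with rfl | hx
  · rcases n.eq_zero_or_pos with rfl | hn
    · simp
    · simp [zero_pow hn.ne']
  · rw [pow_succ, ← pow_mul, h, pow_card_sub_one_eq_one x hx, one_mul]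

theorem isSquare_of_pow_succ_eq_self (hF : ringChar F ≠ 2) {y : F} {k : ℕ}
    (hy : y ^ (k + 1) = y) (hk : k * 2 ∣ Fintype.card F - 1) : IsSquare y := by
  rcases eq_or_ne y 0 with rfl | hy0
  · exact IsSquare.zero
  have hyk : y ^ k = 1 := mul_right_cancel₀ hy0 (by rw [← pow_succ, hy, one_mul])
  obtain ⟨c, hc⟩ := hk
  have hhalf : Fintype.card F / 2 = k * c := by
    have := odd_card_of_char_ne_two hF
    rw [mul_right_comm] at hc
    omega
  rw [isSquare_iff hF hy0, hhalf, pow_mul, hyk, one_pow]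

end FiniteField

theorem stmt9_general {p m r t : ℕ} (hp : p.Prime) (hodd : p ≠ 2) (hme : Even m)
    (hrm : r ∣ m / 2)
    (F : Type*) [Field F] [Fintype F] (hF : Fintype.card F = p ^ m)
    (n : ℕ) (hn : n = (p ^ m - 1) / (p ^ r - 1))
    (α : Fin t → F) :
    ∀ i j, i ≠ j → IsSquare (α i ^ n - α j ^ n) := by
  intro i j _
  have := Fact.mk hp
  have := charP_of_card_eq_prime_pow hF
  obtain ⟨c, hc⟩ : 2 * r ∣ m := by
    obtain ⟨c, hc⟩ := hrm
    obtain ⟨d, hd⟩ := hme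
    exact ⟨c, by rw [mul_assoc]; omega⟩
  have hdvd : (p ^ r - 1) * 2 ∣ p ^ m - 1 := by
    rw [hc, mul_comm 2 r, mul_assoc, pow_mul]
    exact Nat.sub_one_mul_two_dvd_pow_two_mul_sub_one ((hp.odd_of_ne_two hodd).pow) c
  have hnk : n * (p ^ r - 1) = Fintype.card F - 1 := by
    rw [hn, hF, Nat.div_mul_cancel (dvd_of_mul_right_dvd hdvd)]
  have hpr : p ^ r - 1 + 1 = p ^ r := Nat.sub_add_cancel (Nat.one_le_pow _ _ hp.pos)
  have hfix : (α i ^ n - α j ^ n) ^ (p ^ r - 1 + 1) = α i ^ n - α j ^ n := by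
    rw [hpr, sub_pow_char_pow, ← hpr, FiniteField.pow_pow_succ_eq_pow hnk,
      FiniteField.pow_pow_succ_eq_pow hnk]
  refine FiniteField.isSquare_of_pow_succ_eq_self ?_ hfix (hF ▸ hdvd)
  rwa [ringChar.eq F p]

/-- For `q = p^m` an odd square, `r ∣ m/2`, `n = (q-1)/(p^r - 1)`, and elements
`α₁, …, α_t ∈ F_q^*` with pairwise distinct `n`-th powers, each difference
`αᵢⁿ - αⱼⁿ` (`i ≠ j`) is a square in `F_q`. -/
theorem stmt9 {p m r t : ℕ} (hp : p.Prime) (hodd : p ≠ 2) (hm : 0 < m) (hme : Even m)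
    (hr : 0 < r) (hrm : r ∣ m / 2)
    (F : Type*) [Field F] [Fintype F] (hF : Fintype.card F = p ^ m)
    (n : ℕ) (hn : n = (p ^ m - 1) / (p ^ r - 1))
    (α : Fin t → F) (hα : ∀ i, α i ≠ 0)
    (hdist : ∀ i j, i ≠ j → α i ^ n ≠ α j ^ n) :
    ∀ i j, i ≠ j → IsSquare (α i ^ n - α j ^ n) :=
  stmt9_general hp hodd hme hrm F hF n hn α
end
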